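/- Let f be a polynomial with integer coefficients of degree d ≥ 1, and let p be a prime such that the p-adic valuation of the discriminant of f equals 1. Then the reduction of f modulo p has no root (in an algebraic closure of F_p) of multiplicity three or higher. -/

import Mathlib

open Polynomial

/-- The Sylvester matrix of two polynomials. -/
noncomputable def sylvesterMatrix {R : Type*} [CommRing R] (f g : R[X]) :
    Matrix (Fin (f.natDegree + g.natDegree)) (Fin (f.natDegree + g.natDegree)) R :=
  Matrix.of fun i j =>
    if (i : ℕ) < g.natDegree then
      (if (i : ℕ) ≤ (j : ℕ) then f.coeff ((j : ℕ) - (i : ℕ)) else 0)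
    else
      (if (i : ℕ) - g.natDegree ≤ (j : ℕ) then g.coeff ((j : ℕ) - ((i : ℕ) - g.natDegree)) else 0)

/-- The resultant of two polynomials, as the determinant of the Sylvester matrix. -/
noncomputable def resultant {R : Type*} [CommRing R] (f g : R[X]) : R :=
  (sylvesterMatrix f g).det

/-- The discriminant of an integer polynomial:
`disc f = (-1)^(n(n-1)/2) * Res(f, f') / lc(f)`. -/
noncomputable def intDisc (f : ℤ[X]) : ℤ :=
  (-1) ^ (f.natDegree * (f.natDegree - 1) / 2) * (_root_.resultant f (derivative f) / f.leadingCoeff)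

/-!
Mathlib's `Polynomial.discr f` is, up to sign, the determinant of the Sylvester matrix `S` of `f'`
and `f` with its last row divided by `lc f`; `intDisc f` equals it. If `(X - α)³ ∣ f mod p`, then
`(X - α)²` divides `f mod p` and `f' mod p`, hence every polynomial `u f' + v f` whose coefficient
vector is a column of `S mod p`; so `S mod p` has corank at least `2`, and at least `3` when
`p ∣ lc f`, since `f mod p` then has smaller degree. An integer matrix whose reduction mod `p` has
corank at least `2` has adjugate `≡ 0 mod p`, and `det (adj A) = (det A)^(N-1)` forces
`p² ∣ det A`. Applied to `S` when `p ∤ lc f`, and to `S` with its last row rescaled (which adds at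
most one to the rank) when `p ∣ lc f`, this gives `p² ∣ disc f`, contradicting `v_p (disc f) = 1`.
-/

theorem sylvesterMatrix_eq_transpose_sylvester {R : Type*} [CommRing R] (f g : R[X]) :
    sylvesterMatrix f g = ((sylvester g f g.natDegree f.natDegree).reindex
      (finCongr (add_comm _ _)) (finCongr (add_comm _ _))).transpose := by
  ext i j
  simp only [sylvesterMatrix, sylvester, Fin.addCases, Matrix.of_apply, Matrix.transpose_apply,
    Matrix.reindex_apply, Matrix.submatrix_apply, finCongr_symm, finCongr_apply, Set.mem_Icc,
    Fin.val_cast, Fin.val_castLT, Fin.val_subNat, eq_rec_constant, dite_eq_ite]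
  split_ifs
  all_goals first | rfl | omega | exact coeff_eq_zero_of_natDegree_lt (by omega)

theorem resultant_eq_polynomial_resultant_swap {R : Type*} [CommRing R] (f g : R[X]) :
    _root_.resultant f g = Polynomial.resultant g f := by
  rw [_root_.resultant, sylvesterMatrix_eq_transpose_sylvester, Matrix.det_transpose,
    Matrix.det_reindex_self, Polynomial.resultant]

theorem intDisc_eq_discr {f : ℤ[X]} (hf : 0 < f.natDegree) : intDisc f = f.discr := by
  have hlc : f.leadingCoeff ≠ 0 := leadingCoeff_ne_zero.2 (ne_zero_of_natDegree_gt hf)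
  rw [intDisc, resultant_eq_polynomial_resultant_swap, Polynomial.resultant, natDegree_derivative,
    ← sylvesterDeriv_updateRow f hf, Matrix.det_updateRow_smul, Matrix.updateRow_eq_self,
    Int.mul_ediv_cancel_left _ hlc, discr, mul_comm]

theorem sq_dvd_of_pow_succ_dvd_pow {p : ℕ} [Fact p.Prime] {a : ℤ} {k : ℕ}
    (h : (p : ℤ) ^ (k + 1) ∣ a ^ k) : (p : ℤ) ^ 2 ∣ a := by
  rcases eq_or_ne a 0 with rfl | ha
  · exact dvd_zero _
  have hpow : padicValInt p (a ^ k) = k * padicValInt p a := by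
    simp only [padicValInt, Int.natAbs_pow, padicValNat.pow]
  rw [padicValInt_dvd_iff] at h ⊢
  rcases h with h | h
  · exact absurd (pow_eq_zero_iff'.1 h).1 ha
  · right
    rw [hpow] at h
    by_contra! hv
    nlinarith

namespace Matrix

theorem rank_updateRow_le {K m n : Type*} [Field K] [Finite m] [Fintype n] [DecidableEq m]
    (A : Matrix m n K) (i : m) (v : n → K) :
    (A.updateRow i v).rank ≤ A.rank + 1 := by
  have hrows : Set.range (A.updateRow i v).row ⊆ insert v (Set.range A.row) := by
    rintro _ ⟨k, rfl⟩
    rcases eq_or_ne k i with rfl | hk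
    · exact Or.inl updateRow_self
    · exact Or.inr ⟨k, (updateRow_ne hk).symm⟩
  rw [rank_eq_finrank_span_row, rank_eq_finrank_span_row]
  calc Module.finrank K (Submodule.span K (Set.range (A.updateRow i v).row))
      ≤ Module.finrank K (Submodule.span K (insert v (Set.range A.row))) :=
        Submodule.finrank_mono (Submodule.span_mono hrows)
    _ ≤ Module.finrank K (K ∙ v) + Module.finrank K (Submodule.span K (Set.range A.row)) := by
        rw [Submodule.span_insert]
        exact Submodule.finrank_add_le_finrank_add_finrank _ _
    _ ≤ Module.finrank K (Submodule.span K (Set.range A.row)) + 1 := by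
        rw [add_comm]
        gcongr
        simpa using finrank_span_le_card (R := K) {v}

variable {n : Type*} [Fintype n] [DecidableEq n]

theorem adjugate_eq_zero_of_rank_add_two_le {K : Type*} [Field K] (A : Matrix n n K)
    (h : A.rank + 2 ≤ Fintype.card n) : adjugate A = 0 := by
  ext i j
  rw [adjugate_apply, zero_apply]
  by_contra hdet
  have hfull := rank_of_isUnit _ ((isUnit_iff_isUnit_det _).2 (Ne.isUnit hdet))
  have := rank_updateRow_le A j (Pi.single i 1)
  omega

theorem sq_dvd_det_of_rank_add_two_le {p : ℕ} [Fact p.Prime] {K : Type*} [Field K] [CharP K p]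
    (A : Matrix n n ℤ) (h : (A.map (Int.cast : ℤ → K)).rank + 2 ≤ Fintype.card n) :
    (p : ℤ) ^ 2 ∣ A.det := by
  have hadj : ∀ i j, (p : ℤ) ∣ adjugate A i j := by
    intro i j
    rw [← CharP.intCast_eq_zero_iff K]
    have := congr_fun₂ ((Int.castRingHom K).map_adjugate A) i j
    simp only [RingHom.mapMatrix_apply, Int.coe_castRingHom,
      adjugate_eq_zero_of_rank_add_two_le _ h] at this
    simpa using this
  choose B hB using hadj
  obtain ⟨N, hN⟩ : ∃ N, Fintype.card n = N + 1 := ⟨Fintype.card n - 1, by omega⟩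
  refine sq_dvd_of_pow_succ_dvd_pow (k := N) ⟨(of B).det, ?_⟩
  rw [← hN, show N = Fintype.card n - 1 by omega, ← det_adjugate,
    show adjugate A = (p : ℤ) • of B from ext hB, det_smul]

end Matrix

namespace Polynomial

variable {K : Type*} [Field K]

theorem mul_mem_degreeLT {f q : K[X]} {n t : ℕ} (hq : q ∈ degreeLT K n)
    (h : f.natDegree + n ≤ t) : f * q ∈ degreeLT K t := by
  rcases eq_or_ne f 0 with rfl | hf
  · simp
  rcases eq_or_ne q 0 with rfl | hq0
  · simp
  rw [mem_degreeLT, ← natDegree_lt_iff_degree_lt hq0] at hq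
  rw [mem_degreeLT, ← natDegree_lt_iff_degree_lt (mul_ne_zero hf hq0), natDegree_mul hf hq0]
  omega

theorem mem_map_mulLeft_degreeLT {D P : K[X]} {k : ℕ} (hD : D ≠ 0) (hDP : D ∣ P)
    (hP : P ∈ degreeLT K (k + D.natDegree)) :
    P ∈ (degreeLT K k).map (LinearMap.mulLeft K D) := by
  obtain ⟨R, rfl⟩ := hDP
  refine ⟨R, ?_, rfl⟩
  rcases eq_or_ne R 0 with rfl | hR
  · exact zero_mem _
  rw [mem_degreeLT, ← natDegree_lt_iff_degree_lt (mul_ne_zero hD hR), natDegree_mul hD hR] at hP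
  rw [SetLike.mem_coe, mem_degreeLT, ← natDegree_lt_iff_degree_lt hR]
  omega

theorem rank_sylvester_le_of_dvd {D f g : K[X]} {m n k : ℕ} (hD : D ≠ 0)
    (hDf : D ∣ f) (hDg : D ∣ g) (hfm : f.natDegree ≤ m) (hgn : g.natDegree ≤ n)
    (hf : f.natDegree + n ≤ k + D.natDegree) (hg : g.natDegree + m ≤ k + D.natDegree) :
    (sylvester f g m n).rank ≤ k := by
  set L := sylvesterMap f g hfm hgn
  rw [← toMatrix_sylvesterMap' f g hfm hgn, Matrix.rank_eq_finrank_range_toLin _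
    (degreeLT.basis K (m + n)) (((degreeLT.basis K m).prod (degreeLT.basis K n)).reindex
    finSumFinEquiv), Matrix.toLin_toMatrix]
  have hrange : (LinearMap.range L).map (degreeLT K (m + n)).subtype ≤
      (degreeLT K k).map (LinearMap.mulLeft K D) := by
    rintro _ ⟨_, ⟨⟨p, q⟩, rfl⟩, rfl⟩
    exact mem_map_mulLeft_degreeLT hD (dvd_add (hDf.mul_right _) (hDg.mul_right _))
      (add_mem (mul_mem_degreeLT q.2 hf) (mul_mem_degreeLT p.2 hg))
  calc Module.finrank K (LinearMap.range L)
      = Module.finrank K ((LinearMap.range L).map (degreeLT K (m + n)).subtype) :=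
        (Submodule.finrank_map_subtype_eq _ _).symm
    _ ≤ Module.finrank K ((degreeLT K k).map (LinearMap.mulLeft K D)) :=
        Submodule.finrank_mono hrange
    _ ≤ Module.finrank K (degreeLT K k) := Submodule.finrank_map_le _ _
    _ = k := by simp [Module.finrank_eq_card_basis (degreeLT.basis K k)]

theorem rank_sylvester_derivative_le_of_pow_three_dvd {g : K[X]} {α : K} {n k : ℕ}
    (hα : (X - C α) ^ 3 ∣ g) (hgn : g.natDegree ≤ n) (hk : g.natDegree + n ≤ k + 3)
    (hnk : n ≤ k + 2) : ((derivative g).sylvester g (n - 1) n).rank ≤ k := by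
  have hD : (X - C α) ^ 2 ≠ 0 := pow_ne_zero _ (X_sub_C_ne_zero α)
  have hDg : (X - C α) ^ 2 ∣ g := (pow_dvd_pow _ (by norm_num)).trans hα
  have hDg' : (X - C α) ^ 2 ∣ derivative g := pow_sub_one_dvd_derivative_of_pow_dvd (n := 3) hα
  have hdeg' := natDegree_derivative_le g
  refine rank_sylvester_le_of_dvd hD hDg' hDg (by omega) hgn ?_ ?_ <;>
    simp only [natDegree_pow, natDegree_X_sub_C] <;> omega

theorem sq_dvd_discr_of_pow_three_dvd_map {p : ℕ} [Fact p.Prime] [CharP K p] {f : ℤ[X]}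
    (hf : 2 ≤ f.natDegree) {α : K} (hα : (X - C α) ^ 3 ∣ f.map (Int.castRingHom K)) :
    (p : ℤ) ^ 2 ∣ f.discr := by
  set n := f.natDegree
  set M := f.sylvesterDeriv
  set S := (derivative f).sylvester f (n - 1) n
  set r : Fin (n - 1 + n) := ⟨2 * n - 2, by omega⟩
  have hMS : M.updateRow r (f.leadingCoeff • M r) = S := sylvesterDeriv_updateRow f (by omega)
  have hSbar : S.map (Int.cast : ℤ → K) =
      (derivative (f.map (Int.castRingHom K))).sylvester (f.map (Int.castRingHom K)) (n - 1) n := by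
    rw [derivative_map, sylvester_map_map, RingHom.mapMatrix_apply, Int.coe_castRingHom]
  have hdeg : (f.map (Int.castRingHom K)).natDegree ≤ n := natDegree_map_le
  suffices (p : ℤ) ^ 2 ∣ M.det from this.mul_right _
  by_cases hlc : ((f.leadingCoeff : ℤ) : K) = 0
  · have hdeg_lt : (f.map (Int.castRingHom K)).natDegree < n := natDegree_map_lt' hlc (by omega)
    have hrankS := rank_sylvester_derivative_le_of_pow_three_dvd (k := 2 * n - 4) hα hdeg
      (by omega) (by omega)
    have hMbar : M.map (Int.cast : ℤ → K) =
        (S.map (Int.cast : ℤ → K)).updateRow r (M.map (Int.cast : ℤ → K) r) := by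
      rw [← hMS]
      ext i j
      rcases eq_or_ne i r with rfl | hi <;> simp [Matrix.updateRow_ne, *]
    have hrankM := Matrix.rank_updateRow_le (S.map (Int.cast : ℤ → K)) r
      (M.map (Int.cast : ℤ → K) r)
    rw [← hMbar, hSbar] at hrankM
    refine Matrix.sq_dvd_det_of_rank_add_two_le (K := K) M ?_
    rw [Fintype.card_fin]
    omega
  · have hcop : IsCoprime ((p : ℤ) ^ 2) f.leadingCoeff := by
      refine IsCoprime.pow_left ((Nat.prime_iff_prime_int.1 Fact.out).coprime_iff_not_dvd.2 ?_)
      rwa [← CharP.intCast_eq_zero_iff K]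
    have hrankS := rank_sylvester_derivative_le_of_pow_three_dvd (k := 2 * n - 3) hα hdeg
      (by omega) (by omega)
    have hS := Matrix.sq_dvd_det_of_rank_add_two_le (K := K) S
      (by rw [hSbar, Fintype.card_fin]; omega)
    rw [← hMS, Matrix.det_updateRow_smul, Matrix.updateRow_eq_self] at hS
    exact hcop.dvd_of_dvd_mul_left hS

end Polynomial

theorem no_triple_root_of_padicValInt_disc_eq_one
    (f : ℤ[X]) (hd : 1 ≤ f.natDegree) (p : ℕ) [Fact p.Prime]
    (hdisc : intDisc f ≠ 0) (hv : padicValInt p (intDisc f) = 1) :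
    ∀ α : AlgebraicClosure (ZMod p),
      ¬ ((X - C α) ^ 3 ∣ f.map (Int.castRingHom (AlgebraicClosure (ZMod p)))) := by
  intro α hα
  rw [intDisc_eq_discr hd] at hdisc hv
  rcases hd.eq_or_lt with hd1 | hd2
  · rw [discr_of_degree_eq_one ((degree_eq_iff_natDegree_eq_of_pos one_pos).2 hd1.symm)] at hv
    simp at hv
  · have h2 := (padicValInt_dvd_iff 2 f.discr).1 (sq_dvd_discr_of_pow_three_dvd_map hd2 hα)
    omega
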